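/- (Schmidt, 1972) There exists an absolute constant C > 0 such that for every m ≥ 2 and every point set ξ = {ξ^1,…,ξ^m} ⊂ [0,1)^2 one has D_∞(ξ) ≥ C·m^{−1}·log m. -/

import Mathlib

/-- The discrepancy function of a point set `ξ = (ξ^1,…,ξ^m) ⊂ [0,1)^d` at `b ∈ [0,1)^d`:
`disc(ξ,b) = ∏_j b_j − (1/m)·#{μ : ξ^μ_j < b_j for all j}`. -/
noncomputable def disc (d m : ℕ) (ξ : Fin m → Fin d → ℝ) (b : Fin d → ℝ) : ℝ :=
  (∏ j, b j) - (1 / (m : ℝ)) *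
    ((Finset.univ.filter (fun μ : Fin m => ∀ j, ξ μ j < b j)).card : ℝ)

/-- The `L_q`-discrepancy `D_q(ξ) = (∫_{[0,1)^d} |disc(ξ,b)|^q db)^{1/q}` for `1 ≤ q < ∞`. -/
noncomputable def Dq (d m : ℕ) (ξ : Fin m → Fin d → ℝ) (q : ℝ) : ℝ :=
  (∫ b in Set.univ.pi (fun _ : Fin d => Set.Ico (0 : ℝ) 1),
    |disc d m ξ b| ^ q) ^ (1 / q)

/-- The `L_∞` (star) discrepancy `D_∞(ξ) = sup_{b ∈ [0,1)^d} |disc(ξ,b)|`. -/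
noncomputable def Dinf (d m : ℕ) (ξ : Fin m → Fin d → ℝ) : ℝ :=
  ⨆ b : ↥(Set.univ.pi fun _ : Fin d => Set.Ico (0 : ℝ) 1), |disc d m ξ (b : Fin d → ℝ)|

/-!
Halász's proof, run on the `4 ^ (n + 1)` midpoints of the cells of mesh `2 ^ (-(n + 1))`, where
`2 m ≤ 2 ^ n`. For each level `k ≤ n` at least half of the `2 ^ n` dyadic boxes of shape
`2 ^ (-k) × 2 ^ (-(n - k))` contain no point of `ξ`, and the sum `f_k` of the product Haar
functions of the empty boxes is orthogonal to the counting part of the discrepancy while its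
pairing with the area part `x y` is at least `2 ^ n / 8`. The Riesz product
`R = ∏ k, (1 + f_k / 4)` is nonnegative with mean one, so `∑ |R - 1| ≤ 2 · 4 ^ (n + 1)` and
`⟨R - 1, disc⟩ ≤ 2 · 4 ^ (n + 1) · D_∞`. Expanding `R - 1`, the linear terms contribute at least
`(n + 1) 2 ^ n / 32` to `⟨R - 1, disc⟩`. The cross terms `f_a f_b ∏_{a<k<b} (1 + f_k / 4)` are
again Haar functions, on the intersections of the boxes of levels `a` and `b`, vanishing on
occupied ones, and their pairings with `x y` decay like `(5 / 8) ^ (b - a)`, so they cost at most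
`(n + 1) 2 ^ n / 48`. Hence `D_∞ ≥ (n + 1) / (768 · 2 ^ n)`, which is `≳ log m / m`.
-/

namespace Schmidt

open Finset

noncomputable section

lemma sum_range_mul {M : Type*} [AddCommMonoid M] (N K : ℕ) (g : ℕ → M) :
    ∑ i ∈ range (N * K), g i = ∑ A ∈ range N, ∑ r ∈ range K, g (A * K + r) := by
  induction N with
  | zero => simp
  | succ N ih => rw [Nat.succ_mul, sum_range_add, ih, sum_range_succ]

lemma prod_range_one_add {R : Type*} [CommSemiring R] (g : ℕ → R) (b : ℕ) :
    ∏ k ∈ range b, (1 + g k) = 1 + ∑ a ∈ range b, g a * ∏ k ∈ Ico (a + 1) b, (1 + g k) := by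
  induction b with
  | zero => simp
  | succ b ih =>
    have hstep : ∀ a ∈ range b, g a * ∏ k ∈ Ico (a + 1) (b + 1), (1 + g k) =
        g a * (∏ k ∈ Ico (a + 1) b, (1 + g k)) * (1 + g b) := fun a ha => by
      rw [prod_Ico_succ_top (by simpa using ha), mul_assoc]
    rw [prod_range_succ, ih, sum_range_succ, Ico_self, prod_empty, sum_congr rfl hstep, ← sum_mul]
    ring

lemma div_two_pow_eq_of_le {e₀ e i i' : ℕ} (he : e₀ ≤ e) (hi : i / 2 ^ e₀ = i' / 2 ^ e₀) :
    i / 2 ^ e = i' / 2 ^ e := by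
  obtain ⟨d, rfl⟩ := Nat.exists_eq_add_of_le he
  rw [pow_add, ← Nat.div_div_eq_div_mul, ← Nat.div_div_eq_div_mul, hi]

lemma floor_mul_two_pow_sub {K : Type*} [Field K] [LinearOrder K] [IsStrictOrderedRing K]
    [FloorRing K] {t : K} {k e B : ℕ} (h : ⌊t * 2 ^ k⌋ = B) (he : e ≤ k) :
    ⌊t * 2 ^ (k - e)⌋ = (B / 2 ^ e : ℕ) := by
  have ht : t * 2 ^ (k - e) = t * 2 ^ k / ((2 ^ e : ℕ) : K) := by
    rw [Nat.cast_pow, Nat.cast_ofNat, pow_sub₀ _ two_ne_zero he, mul_div_assoc, div_eq_mul_inv]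
  rw [ht, Int.floor_div_natCast, h]
  norm_cast

def gridPt (n i : ℕ) : ℝ := (2 * i + 1) / 2 ^ (n + 2)

def haarSign (p i : ℕ) : ℝ := (-1) ^ (i / 2 ^ p)

def haarCoeff (p : ℕ) (w : ℕ → ℝ) (A : ℕ) : ℝ :=
  ∑ r ∈ range (2 ^ (p + 1)), haarSign p r * w (A * 2 ^ (p + 1) + r)

lemma gridPt_mem_Ico {n i : ℕ} (hi : i < 2 ^ (n + 1)) : gridPt n i ∈ Set.Ico (0 : ℝ) 1 := by
  refine ⟨by unfold gridPt; positivity, ?_⟩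
  rw [gridPt, div_lt_one (by positivity), pow_succ]
  have : (i : ℝ) + 1 ≤ 2 ^ (n + 1) := by exact_mod_cast hi
  linarith

lemma haarSign_mul_self (p i : ℕ) : haarSign p i * haarSign p i = 1 := by
  simp [haarSign, ← mul_pow]

lemma abs_haarSign (p i : ℕ) : |haarSign p i| = 1 := by
  simp [haarSign]

lemma haarSign_mul_two_pow_add (p A r : ℕ) :
    haarSign p (A * 2 ^ (p + 1) + r) = haarSign p r := by
  rw [haarSign, haarSign, show A * 2 ^ (p + 1) + r = r + 2 * A * 2 ^ p by ring,
    Nat.add_mul_div_right _ _ (by positivity), pow_add, pow_mul]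
  simp

lemma haarSign_mul_two_pow (p A : ℕ) : haarSign p (A * 2 ^ (p + 1)) = 1 := by
  simpa [haarSign] using haarSign_mul_two_pow_add p A 0

lemma haarSign_of_lt {p r : ℕ} (hr : r < 2 ^ p) : haarSign p r = 1 := by
  simp [haarSign, Nat.div_eq_of_lt hr]

lemma haarSign_two_pow_add {p r : ℕ} (hr : r < 2 ^ p) : haarSign p (2 ^ p + r) = -1 := by
  rw [haarSign, add_comm, Nat.add_div_right _ (by positivity), Nat.div_eq_of_lt hr]
  simp

lemma sum_range_haarSign_mul (p : ℕ) (w : ℕ → ℝ) :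
    ∑ r ∈ range (2 ^ (p + 1)), haarSign p r * w r =
      ∑ r ∈ range (2 ^ p), (w r - w (2 ^ p + r)) := by
  rw [pow_succ, mul_two, sum_range_add, ← sum_add_distrib]
  refine sum_congr rfl fun r hr => ?_
  rw [mem_range] at hr
  rw [haarSign_of_lt hr, haarSign_two_pow_add hr]
  ring

lemma haarCoeff_eq_zero_of_const {p A : ℕ} {w : ℕ → ℝ} {c : ℝ}
    (hw : ∀ r < 2 ^ (p + 1), w (A * 2 ^ (p + 1) + r) = c) : haarCoeff p w A = 0 := by
  rw [haarCoeff, sum_range_haarSign_mul]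
  refine sum_eq_zero fun r hr => ?_
  rw [mem_range] at hr
  rw [hw r (by omega), hw _ (by rw [pow_succ]; omega), sub_self]

lemma haarCoeff_const (p : ℕ) (c : ℝ) (A : ℕ) : haarCoeff p (fun _ => c) A = 0 :=
  haarCoeff_eq_zero_of_const fun _ _ => rfl

lemma haarCoeff_gridPt (n p A : ℕ) : haarCoeff p (gridPt n) A = -(4 ^ p / 2 ^ (n + 1)) := by
  rw [haarCoeff, sum_range_haarSign_mul]
  have hstep : ∀ r ∈ range (2 ^ p),
      gridPt n (A * 2 ^ (p + 1) + r) - gridPt n (A * 2 ^ (p + 1) + (2 ^ p + r)) =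
        -(2 ^ p / 2 ^ (n + 1)) := by
    intro r _
    simp only [gridPt]
    push_cast
    field_simp
    ring
  rw [sum_congr rfl hstep, sum_const, card_range, nsmul_eq_mul,
    show (4 : ℝ) ^ p = 2 ^ p * 2 ^ p by rw [← mul_pow]; norm_num]
  push_cast
  ring

lemma gridPt_mul_two_pow {n p : ℕ} (hp : p ≤ n) (A r : ℕ) :
    gridPt n (A * 2 ^ (p + 1) + r) * 2 ^ (n - p) = A + (2 * r + 1) / 2 ^ (p + 2) := by
  have h : (2 : ℝ) ^ (n + 2) = 2 ^ (n - p) * 2 ^ (p + 2) := by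
    rw [← pow_add]; congr 1; omega
  rw [gridPt, h]
  push_cast
  field_simp
  ring

/-- The grid points of the `A`-th block lie strictly inside `[A, A + 1) / 2 ^ (n - p)`, so the
indicator is constant on the block unless `t` lies there too. -/
lemma haarCoeff_indicator {n p : ℕ} (hp : p ≤ n) {t : ℝ} {A : ℕ}
    (hA : ⌊t * 2 ^ (n - p)⌋ ≠ A) :
    haarCoeff p (fun i => if t < gridPt n i then 1 else 0) A = 0 := by
  have hpos : (0 : ℝ) < 2 ^ (n - p) := by positivity
  have hbounds : ∀ r < 2 ^ (p + 1), (A : ℝ) < gridPt n (A * 2 ^ (p + 1) + r) * 2 ^ (n - p) ∧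
      gridPt n (A * 2 ^ (p + 1) + r) * 2 ^ (n - p) < A + 1 := by
    intro r hr
    have hr' : (2 * r + 1 : ℝ) < 2 ^ (p + 2) := by
      rw [pow_succ]; exact_mod_cast (by omega : 2 * r + 1 < 2 ^ (p + 1) * 2)
    have h0 : (0 : ℝ) < (2 * r + 1) / 2 ^ (p + 2) := by positivity
    have h1 : (2 * r + 1 : ℝ) / 2 ^ (p + 2) < 1 := (div_lt_one (by positivity)).mpr hr'
    rw [gridPt_mul_two_pow hp]
    constructor <;> linarith
  rcases lt_or_gt_of_ne hA with h | h
  · refine haarCoeff_eq_zero_of_const (c := 1) fun r hr => if_pos ?_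
    have h1 : t * 2 ^ (n - p) < A := by
      have := Int.lt_floor_add_one (t * 2 ^ (n - p))
      have h' : (⌊t * 2 ^ (n - p)⌋ : ℝ) + 1 ≤ A := by exact_mod_cast h
      linarith
    exact lt_of_mul_lt_mul_right (h1.trans (hbounds r hr).1) hpos.le
  · refine haarCoeff_eq_zero_of_const (c := 0) fun r hr => if_neg ?_
    have h1 : (A : ℝ) + 1 ≤ t * 2 ^ (n - p) := by
      have := Int.floor_le (t * 2 ^ (n - p))
      have h' : (A : ℝ) + 1 ≤ ⌊t * 2 ^ (n - p)⌋ := by exact_mod_cast h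
      linarith
    intro ht
    have := mul_lt_mul_of_pos_right ht hpos
    linarith [(hbounds r hr).2]

def gridSum (n : ℕ) (F : ℕ → ℕ → ℝ) : ℝ :=
  ∑ i ∈ range (2 ^ (n + 1)), ∑ j ∈ range (2 ^ (n + 1)), F i j

lemma gridSum_sum {ι : Type*} (n : ℕ) (s : Finset ι) (F : ι → ℕ → ℕ → ℝ) :
    gridSum n (fun i j => ∑ b ∈ s, F b i j) = ∑ b ∈ s, gridSum n (F b) := by
  simp only [gridSum]
  rw [sum_congr rfl fun i _ => sum_comm]
  exact sum_comm

lemma gridSum_add (n : ℕ) (F G : ℕ → ℕ → ℝ) :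
    gridSum n (fun i j => F i j + G i j) = gridSum n F + gridSum n G := by
  simp only [gridSum, sum_add_distrib]

lemma gridSum_sub (n : ℕ) (F G : ℕ → ℕ → ℝ) :
    gridSum n (fun i j => F i j - G i j) = gridSum n F - gridSum n G := by
  simp only [gridSum, sum_sub_distrib]

lemma gridSum_const_mul (n : ℕ) (c : ℝ) (F : ℕ → ℕ → ℝ) :
    gridSum n (fun i j => c * F i j) = c * gridSum n F := by
  simp only [gridSum, mul_sum]

lemma gridSum_mul_const (n : ℕ) (F : ℕ → ℕ → ℝ) (c : ℝ) :
    gridSum n (fun i j => F i j * c) = gridSum n F * c := by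
  simp only [gridSum, sum_mul]

lemma gridSum_div_const (n : ℕ) (F : ℕ → ℕ → ℝ) (c : ℝ) :
    gridSum n (fun i j => F i j / c) = gridSum n F / c := by
  simp only [gridSum, sum_div]

lemma gridSum_const (n : ℕ) (c : ℝ) : gridSum n (fun _ _ => c) = 4 ^ (n + 1) * c := by
  simp only [gridSum, sum_const, card_range, nsmul_eq_mul]
  push_cast
  rw [show (4 : ℝ) ^ (n + 1) = 2 ^ (n + 1) * 2 ^ (n + 1) by rw [← mul_pow]; norm_num]
  ring

lemma gridSum_mono {n : ℕ} {F G : ℕ → ℕ → ℝ}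
    (h : ∀ i < 2 ^ (n + 1), ∀ j < 2 ^ (n + 1), F i j ≤ G i j) : gridSum n F ≤ gridSum n G :=
  sum_le_sum fun i hi => sum_le_sum fun j hj => h i (mem_range.mp hi) j (mem_range.mp hj)

section Discrepancy

variable {d m : ℕ} (ξ : Fin m → Fin d → ℝ)

lemma abs_disc_le_one {y : Fin d → ℝ} (hy : y ∈ Set.univ.pi fun _ => Set.Ico (0 : ℝ) 1) :
    |disc d m ξ y| ≤ 1 := by
  set c := #(univ.filter fun μ : Fin m => ∀ j, ξ μ j < y j)
  have hcount : 1 / (m : ℝ) * c ≤ 1 := by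
    rw [one_div_mul_eq_div]
    exact div_le_one_of_le₀ (by exact_mod_cast (card_filter_le _ _).trans (card_fin m).le)
      (Nat.cast_nonneg m)
  have hcount0 : 0 ≤ 1 / (m : ℝ) * c := by positivity
  have hprod : ∏ j, y j ≤ 1 :=
    prod_le_one (fun j _ => (hy j (Set.mem_univ j)).1) fun j _ => (hy j (Set.mem_univ j)).2.le
  have hprod0 : 0 ≤ ∏ j, y j := prod_nonneg fun j _ => (hy j (Set.mem_univ j)).1
  rw [disc, abs_sub_le_iff]
  constructor <;> linarith

lemma abs_disc_le_Dinf {y : Fin d → ℝ} (hy : y ∈ Set.univ.pi fun _ => Set.Ico (0 : ℝ) 1) :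
    |disc d m ξ y| ≤ Dinf d m ξ :=
  le_ciSup (f := fun b : ↥(Set.univ.pi fun _ : Fin d => Set.Ico (0 : ℝ) 1) => |disc d m ξ b|)
    ⟨1, Set.forall_mem_range.mpr fun b => abs_disc_le_one ξ b.2⟩ ⟨y, hy⟩

lemma Dinf_nonneg : 0 ≤ Dinf d m ξ := Real.iSup_nonneg fun _ => abs_nonneg _

end Discrepancy

lemma disc_two {m : ℕ} (ξ : Fin m → Fin 2 → ℝ) (x y : ℝ) :
    disc 2 m ξ ![x, y] = x * y - (1 / m) * ∑ μ, (if ξ μ 0 < x then 1 else 0) *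
      (if ξ μ 1 < y then 1 else 0) := by
  simp only [disc, Fin.prod_univ_two, Fin.forall_fin_two, card_filter, Nat.cast_sum]
  congr 2
  refine sum_congr rfl fun μ _ => ?_
  by_cases h0 : ξ μ 0 < x <;> by_cases h1 : ξ μ 1 < y <;> simp [h0, h1]

def gridDisc {m : ℕ} (ξ : Fin m → Fin 2 → ℝ) (n i j : ℕ) : ℝ :=
  disc 2 m ξ ![gridPt n i, gridPt n j]

lemma abs_gridDisc_le_Dinf {m : ℕ} (ξ : Fin m → Fin 2 → ℝ) {n i j : ℕ}
    (hi : i < 2 ^ (n + 1)) (hj : j < 2 ^ (n + 1)) : |gridDisc ξ n i j| ≤ Dinf 2 m ξ :=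
  abs_disc_le_Dinf ξ fun k _ => by fin_cases k <;> simp [gridPt_mem_Ico hi, gridPt_mem_Ico hj]

def BlockConst (e e' : ℕ) (F : ℕ → ℕ → ℝ) : Prop :=
  ∀ i j i' j', i / 2 ^ e = i' / 2 ^ e → j / 2 ^ e' = j' / 2 ^ e' → F i j = F i' j'

namespace BlockConst

variable {e e' : ℕ} {F G : ℕ → ℕ → ℝ}

lemma of_div (e e' : ℕ) (G : ℕ → ℕ → ℝ) :
    BlockConst e e' fun i j => G (i / 2 ^ e) (j / 2 ^ e') :=
  fun _ _ _ _ hi hj => by dsimp only; rw [hi, hj]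

lemma haarSign_left (p e' : ℕ) : BlockConst p e' fun i _ => haarSign p i :=
  fun _ _ _ _ hi _ => by simp only [haarSign, hi]

lemma haarSign_right (e q : ℕ) : BlockConst e q fun _ j => haarSign q j :=
  fun _ _ _ _ _ hj => by simp only [haarSign, hj]

lemma congr (hF : BlockConst e e' F) (hFG : ∀ i j, F i j = G i j) : BlockConst e e' G :=
  fun i j i' j' hi hj => by rw [← hFG, ← hFG, hF i j i' j' hi hj]

lemma mono (hF : BlockConst e e' F) {e₀ e₀' : ℕ} (he : e₀ ≤ e) (he' : e₀' ≤ e') :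
    BlockConst e₀ e₀' F :=
  fun i j i' j' hi hj =>
    hF i j i' j' (div_two_pow_eq_of_le he hi) (div_two_pow_eq_of_le he' hj)

lemma mul (hF : BlockConst e e' F) (hG : BlockConst e e' G) :
    BlockConst e e' fun i j => F i j * G i j :=
  fun i j i' j' hi hj => by dsimp only; rw [hF i j i' j' hi hj, hG i j i' j' hi hj]

lemma comp (hF : BlockConst e e' F) (g : ℝ → ℝ) : BlockConst e e' fun i j => g (F i j) :=
  fun i j i' j' hi hj => by dsimp only; rw [hF i j i' j' hi hj]

lemma prod {ι : Type*} {s : Finset ι} {F : ι → ℕ → ℕ → ℝ}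
    (hF : ∀ k ∈ s, BlockConst e e' (F k)) : BlockConst e e' fun i j => ∏ k ∈ s, F k i j :=
  fun i j i' j' hi hj => prod_congr rfl fun k hk => hF k hk i j i' j' hi hj

end BlockConst

def IsHaar (p q : ℕ) (φ : ℕ → ℕ → ℝ) : Prop :=
  ∀ i j, φ i j = φ (i / 2 ^ (p + 1) * 2 ^ (p + 1)) (j / 2 ^ (q + 1) * 2 ^ (q + 1)) *
    (haarSign p i * haarSign q j)

namespace IsHaar

variable {p q n : ℕ} {φ : ℕ → ℕ → ℝ}

lemma of_blockConst
    (h : BlockConst (p + 1) (q + 1) fun i j => φ i j * (haarSign p i * haarSign q j)) :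
    IsHaar p q φ := by
  intro i j
  have hcorner := h i j (i / 2 ^ (p + 1) * 2 ^ (p + 1)) (j / 2 ^ (q + 1) * 2 ^ (q + 1))
    (Nat.mul_div_cancel _ (by positivity)).symm (Nat.mul_div_cancel _ (by positivity)).symm
  dsimp only at hcorner
  rw [haarSign_mul_two_pow, haarSign_mul_two_pow, mul_one, mul_one] at hcorner
  rw [← hcorner]
  calc φ i j = φ i j * ((haarSign p i * haarSign p i) * (haarSign q j * haarSign q j)) := by
        rw [haarSign_mul_self, haarSign_mul_self, mul_one, mul_one]
    _ = _ := by ring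

lemma apply_block (hφ : IsHaar p q φ) {A B r s : ℕ} (hr : r < 2 ^ (p + 1))
    (hs : s < 2 ^ (q + 1)) :
    φ (A * 2 ^ (p + 1) + r) (B * 2 ^ (q + 1) + s) =
      φ (A * 2 ^ (p + 1)) (B * 2 ^ (q + 1)) * (haarSign p r * haarSign q s) := by
  have hdiv : ∀ {e C t : ℕ}, t < 2 ^ e → (C * 2 ^ e + t) / 2 ^ e = C := fun ht => by
    rw [add_comm, Nat.add_mul_div_right _ _ (by positivity), Nat.div_eq_of_lt ht, zero_add]
  rw [hφ, hdiv hr, hdiv hs, haarSign_mul_two_pow_add, haarSign_mul_two_pow_add]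

lemma gridSum_mul (hφ : IsHaar p q φ) (hp : p ≤ n) (hq : q ≤ n) (w₁ w₂ : ℕ → ℝ) :
    gridSum n (fun i j => φ i j * (w₁ i * w₂ j)) =
      ∑ A ∈ range (2 ^ (n - p)), ∑ B ∈ range (2 ^ (n - q)),
        φ (A * 2 ^ (p + 1)) (B * 2 ^ (q + 1)) * (haarCoeff p w₁ A * haarCoeff q w₂ B) := by
  have hsplit : ∀ {e}, e ≤ n → 2 ^ (n + 1) = 2 ^ (n - e) * 2 ^ (e + 1) := fun he => by
    rw [← pow_add]; congr 1; omega
  rw [gridSum]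
  nth_rw 1 [hsplit hp]
  rw [sum_range_mul]
  refine sum_congr rfl fun A _ => ?_
  rw [hsplit hq]
  simp only [sum_range_mul, haarCoeff, mul_sum, sum_mul]
  rw [sum_comm]
  refine sum_congr rfl fun B _ => ?_
  rw [sum_comm]
  refine sum_congr rfl fun s hs => sum_congr rfl fun r hr => ?_
  rw [hφ.apply_block (mem_range.mp hr) (mem_range.mp hs)]
  ring

lemma gridSum_eq_zero (hφ : IsHaar p q φ) (hp : p ≤ n) (hq : q ≤ n) : gridSum n φ = 0 := by
  simpa [haarCoeff_const] using hφ.gridSum_mul hp hq (fun _ => 1) (fun _ => 1)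

/-- The area part of the discrepancy sees only the corner values; the counting part is
invisible as long as `φ` vanishes at the corner of every block containing a point of `ξ`. -/
lemma gridSum_mul_gridDisc (hφ : IsHaar p q φ) (hp : p ≤ n) (hq : q ≤ n) {m : ℕ}
    (ξ : Fin m → Fin 2 → ℝ)
    (hvan : ∀ μ (A B : ℕ), ⌊ξ μ 0 * 2 ^ (n - p)⌋ = A → ⌊ξ μ 1 * 2 ^ (n - q)⌋ = B →
      φ (A * 2 ^ (p + 1)) (B * 2 ^ (q + 1)) = 0) :
    gridSum n (fun i j => φ i j * gridDisc ξ n i j) = 4 ^ p * 4 ^ q / 4 ^ (n + 1) *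
      ∑ A ∈ range (2 ^ (n - p)), ∑ B ∈ range (2 ^ (n - q)),
        φ (A * 2 ^ (p + 1)) (B * 2 ^ (q + 1)) := by
  have hcount : ∀ μ, gridSum n (fun i j => φ i j *
      ((if ξ μ 0 < gridPt n i then 1 else 0) * (if ξ μ 1 < gridPt n j then 1 else 0))) = 0 := by
    intro μ
    rw [hφ.gridSum_mul hp hq]
    refine sum_eq_zero fun A _ => sum_eq_zero fun B _ => ?_
    by_cases hA : ⌊ξ μ 0 * 2 ^ (n - p)⌋ = A
    · by_cases hB : ⌊ξ μ 1 * 2 ^ (n - q)⌋ = B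
      · rw [hvan μ A B hA hB, zero_mul]
      · rw [haarCoeff_indicator hq hB, mul_zero, mul_zero]
    · rw [haarCoeff_indicator hp hA, zero_mul, mul_zero]
  have hexpand : ∀ i j, φ i j * gridDisc ξ n i j =
      φ i j * (gridPt n i * gridPt n j) - (1 / m) * ∑ μ, φ i j *
        ((if ξ μ 0 < gridPt n i then 1 else 0) * (if ξ μ 1 < gridPt n j then 1 else 0)) := by
    intro i j
    rw [gridDisc, disc_two, mul_sub, mul_left_comm _ (1 / (m : ℝ)), mul_sum]
  simp only [hexpand]
  rw [gridSum_sub, gridSum_const_mul, gridSum_sum, sum_eq_zero fun μ _ => hcount μ, mul_zero,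
    sub_zero, hφ.gridSum_mul hp hq]
  simp only [haarCoeff_gridPt, mul_sum]
  refine sum_congr rfl fun A _ => sum_congr rfl fun B _ => ?_
  rw [show (4 : ℝ) ^ (n + 1) = 2 ^ (n + 1) * 2 ^ (n + 1) by rw [← mul_pow]; norm_num]
  field_simp

end IsHaar

section EmptyBoxes

variable {m : ℕ} (ξ : Fin m → Fin 2 → ℝ) (n : ℕ)

/-- The box `[A, A + 1) / 2 ^ k × [B, B + 1) / 2 ^ (n - k)`, of area `2 ^ (-n)`, contains a point
of `ξ`. -/
def BoxOccupied (k A B : ℕ) : Prop :=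
  ∃ μ, ⌊ξ μ 0 * 2 ^ k⌋ = A ∧ ⌊ξ μ 1 * 2 ^ (n - k)⌋ = B

open Classical in
def emptyBox (k A B : ℕ) : ℝ := if BoxOccupied ξ n k A B then 0 else 1

/-- Halász's `f_k`, sampled on the grid: the sum of the product Haar functions of the empty boxes
of shape `2 ^ (-k) × 2 ^ (-(n - k))`. -/
def emptyBoxHaar (k i j : ℕ) : ℝ :=
  emptyBox ξ n k (i / 2 ^ (n - k + 1)) (j / 2 ^ (k + 1)) * (haarSign (n - k) i * haarSign k j)

lemma card_filter_boxOccupied_le (k : ℕ) (S : Finset (ℕ × ℕ)) [DecidablePred fun x : ℕ × ℕ =>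
    BoxOccupied ξ n k x.1 x.2] : #(S.filter fun x => BoxOccupied ξ n k x.1 x.2) ≤ m := by
  refine (card_le_card (t := univ.image fun μ =>
    (⌊ξ μ 0 * 2 ^ k⌋.toNat, ⌊ξ μ 1 * 2 ^ (n - k)⌋.toNat)) fun x hx => ?_).trans
    (card_image_le.trans (card_fin m).le)
  obtain ⟨μ, h0, h1⟩ := (mem_filter.mp hx).2
  exact mem_image.mpr ⟨μ, mem_univ _, by simp [h0, h1]⟩

lemma sum_emptyBox_ge {k : ℕ} (hk : k ≤ n) :
    (2 : ℝ) ^ n - m ≤ ∑ A ∈ range (2 ^ k), ∑ B ∈ range (2 ^ (n - k)), emptyBox ξ n k A B := by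
  classical
  set S := range (2 ^ k) ×ˢ range (2 ^ (n - k))
  have hS : #S = 2 ^ n := by
    rw [card_product, card_range, card_range, ← pow_add]; congr 1; omega
  have hsum : ∑ A ∈ range (2 ^ k), ∑ B ∈ range (2 ^ (n - k)), emptyBox ξ n k A B =
      #(S.filter fun x => ¬ BoxOccupied ξ n k x.1 x.2) := by
    rw [← sum_product' (f := fun A B => emptyBox ξ n k A B), ← sum_boole]
    exact sum_congr rfl fun x _ => by simp only [emptyBox]; split_ifs <;> simp_all
  have hsplit : ((2 ^ n : ℕ) : ℝ) = #(S.filter fun x => BoxOccupied ξ n k x.1 x.2) +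
      #(S.filter fun x => ¬ BoxOccupied ξ n k x.1 x.2) := by
    exact_mod_cast ((card_filter_add_card_filter_not _).trans hS).symm
  have hocc : (#(S.filter fun x => BoxOccupied ξ n k x.1 x.2) : ℝ) ≤ m := by
    exact_mod_cast card_filter_boxOccupied_le ξ n k S
  push_cast at hsplit
  linarith

lemma emptyBoxHaar_mul_haarSign_left (k i j : ℕ) :
    emptyBoxHaar ξ n k i j * haarSign (n - k) i =
      emptyBox ξ n k (i / 2 ^ (n - k + 1)) (j / 2 ^ (k + 1)) * haarSign k j := by
  rw [emptyBoxHaar]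
  linear_combination emptyBox ξ n k (i / 2 ^ (n - k + 1)) (j / 2 ^ (k + 1)) * haarSign k j *
    haarSign_mul_self (n - k) i

lemma emptyBoxHaar_mul_haarSign_right (k i j : ℕ) :
    emptyBoxHaar ξ n k i j * haarSign k j =
      emptyBox ξ n k (i / 2 ^ (n - k + 1)) (j / 2 ^ (k + 1)) * haarSign (n - k) i := by
  rw [emptyBoxHaar]
  linear_combination emptyBox ξ n k (i / 2 ^ (n - k + 1)) (j / 2 ^ (k + 1)) *
    haarSign (n - k) i * haarSign_mul_self k j

lemma isHaar_emptyBoxHaar (k : ℕ) : IsHaar (n - k) k (emptyBoxHaar ξ n k) :=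
  IsHaar.of_blockConst <| (BlockConst.of_div _ _ (emptyBox ξ n k)).congr fun i j => by
    rw [← mul_assoc, emptyBoxHaar_mul_haarSign_left, mul_assoc, haarSign_mul_self, mul_one]

lemma blockConst_emptyBoxHaar (k : ℕ) : BlockConst (n - k) k (emptyBoxHaar ξ n k) :=
  ((BlockConst.of_div _ _ _).mono (by omega) (by omega)).mul
    ((BlockConst.haarSign_left _ _).mul (BlockConst.haarSign_right _ _))

lemma emptyBoxHaar_corner (k A B : ℕ) :
    emptyBoxHaar ξ n k (A * 2 ^ (n - k + 1)) (B * 2 ^ (k + 1)) = emptyBox ξ n k A B := by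
  rw [emptyBoxHaar, haarSign_mul_two_pow, haarSign_mul_two_pow,
    Nat.mul_div_cancel _ (by positivity), Nat.mul_div_cancel _ (by positivity), mul_one, mul_one]

lemma abs_emptyBoxHaar_le (k i j : ℕ) : |emptyBoxHaar ξ n k i j| ≤ 1 := by
  rw [emptyBoxHaar, abs_mul, abs_mul, abs_haarSign, abs_haarSign, mul_one, mul_one, emptyBox]
  split_ifs <;> simp

lemma gridSum_emptyBoxHaar_mul_gridDisc {k : ℕ} (hk : k ≤ n) :
    gridSum n (fun i j => emptyBoxHaar ξ n k i j * gridDisc ξ n i j) =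
      (∑ A ∈ range (2 ^ k), ∑ B ∈ range (2 ^ (n - k)), emptyBox ξ n k A B) / 4 := by
  rw [(isHaar_emptyBoxHaar ξ n k).gridSum_mul_gridDisc (Nat.sub_le n k) hk ξ ?_,
    Nat.sub_sub_self hk]
  · simp only [emptyBoxHaar_corner]
    rw [← pow_add, Nat.sub_add_cancel hk, pow_succ]
    field_simp
  · intro μ A B hA hB
    rw [Nat.sub_sub_self hk] at hA
    rw [emptyBoxHaar_corner, emptyBox, if_pos ⟨μ, hA, hB⟩]

lemma le_gridSum_emptyBoxHaar_mul_gridDisc {k : ℕ} (hk : k ≤ n) (h2m : 2 * m ≤ 2 ^ n) :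
    (2 : ℝ) ^ n / 8 ≤ gridSum n (fun i j => emptyBoxHaar ξ n k i j * gridDisc ξ n i j) := by
  rw [gridSum_emptyBoxHaar_mul_gridDisc ξ n hk]
  have hempty := sum_emptyBox_ge ξ n hk
  have hm : (2 * m : ℝ) ≤ 2 ^ n := by exact_mod_cast h2m
  linarith

end EmptyBoxes

section Riesz

variable {m : ℕ} (ξ : Fin m → Fin 2 → ℝ) (n : ℕ)

def rieszProduct (i j : ℕ) : ℝ := ∏ k ∈ range (n + 1), (1 + emptyBoxHaar ξ n k i j / 4)

def rieszCross (a b i j : ℕ) : ℝ :=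
  emptyBoxHaar ξ n a i j * emptyBoxHaar ξ n b i j *
    ∏ k ∈ Ico (a + 1) b, (1 + emptyBoxHaar ξ n k i j / 4)

lemma rieszProduct_sub_one (i j : ℕ) :
    rieszProduct ξ n i j - 1 = ∑ b ∈ range (n + 1),
      (emptyBoxHaar ξ n b i j / 4 + ∑ a ∈ range b, rieszCross ξ n a b i j / 16) := by
  rw [rieszProduct, prod_one_add_ordered, add_sub_cancel_left]
  refine sum_congr rfl fun b hb => ?_
  have hlt : (range (n + 1)).filter (· < b) = range b := by
    ext k; simp only [mem_filter, mem_range] at hb ⊢; omega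
  rw [hlt, prod_range_one_add, mul_add, mul_one, mul_sum]
  congr 1
  exact sum_congr rfl fun a _ => by rw [rieszCross]; ring

lemma one_add_emptyBoxHaar_div_four_nonneg (k i j : ℕ) : 0 ≤ 1 + emptyBoxHaar ξ n k i j / 4 := by
  linarith [(abs_le.mp (abs_emptyBoxHaar_le ξ n k i j)).1]

lemma abs_one_add_emptyBoxHaar_div_four_le (k i j : ℕ) :
    |1 + emptyBoxHaar ξ n k i j / 4| ≤ 5 / 4 := by
  have h := abs_le.mp (abs_emptyBoxHaar_le ξ n k i j)
  exact abs_le.mpr ⟨by linarith, by linarith⟩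

lemma rieszProduct_nonneg (i j : ℕ) : 0 ≤ rieszProduct ξ n i j :=
  prod_nonneg fun k _ => one_add_emptyBoxHaar_div_four_nonneg ξ n k i j

lemma abs_rieszCross_le (a b i j : ℕ) : |rieszCross ξ n a b i j| ≤ (5 / 4) ^ (b - a - 1) := by
  rw [rieszCross, abs_mul, abs_mul, abs_prod]
  calc |emptyBoxHaar ξ n a i j| * |emptyBoxHaar ξ n b i j| *
        ∏ k ∈ Ico (a + 1) b, |1 + emptyBoxHaar ξ n k i j / 4|
      ≤ 1 * 1 * ∏ k ∈ Ico (a + 1) b, (5 / 4 : ℝ) := by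
        gcongr with k
        · exact abs_emptyBoxHaar_le ξ n a i j
        · exact abs_emptyBoxHaar_le ξ n b i j
        · exact abs_one_add_emptyBoxHaar_div_four_le ξ n k i j
    _ = (5 / 4) ^ (b - a - 1) := by rw [one_mul, one_mul, prod_const, Nat.card_Ico, Nat.sub_sub]

/-- The cross term of levels `a < b` is a Haar function on the intersections of the boxes of
levels `a` and `b`: the intermediate levels are constant there. -/
lemma isHaar_rieszCross {a b : ℕ} (hab : a < b) (hb : b ≤ n) :
    IsHaar (n - b) a (rieszCross ξ n a b) := by
  have key : ∀ i j, rieszCross ξ n a b i j * (haarSign (n - b) i * haarSign a j) =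
      (emptyBox ξ n a (i / 2 ^ (n - a + 1)) (j / 2 ^ (a + 1)) * haarSign (n - a) i) *
        (emptyBox ξ n b (i / 2 ^ (n - b + 1)) (j / 2 ^ (b + 1)) * haarSign b j) *
        ∏ k ∈ Ico (a + 1) b, (1 + emptyBoxHaar ξ n k i j / 4) := by
    intro i j
    rw [← emptyBoxHaar_mul_haarSign_right, ← emptyBoxHaar_mul_haarSign_left, rieszCross]
    ring
  have hconst : BlockConst (n - b + 1) (a + 1) fun i j =>
      (emptyBox ξ n a (i / 2 ^ (n - a + 1)) (j / 2 ^ (a + 1)) * haarSign (n - a) i) *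
        (emptyBox ξ n b (i / 2 ^ (n - b + 1)) (j / 2 ^ (b + 1)) * haarSign b j) *
        ∏ k ∈ Ico (a + 1) b, (1 + emptyBoxHaar ξ n k i j / 4) :=
    ((((BlockConst.of_div _ _ (emptyBox ξ n a)).mono (by omega) le_rfl).mul
      ((BlockConst.haarSign_left _ (a + 1)).mono (by omega) le_rfl)).mul
      (((BlockConst.of_div _ _ (emptyBox ξ n b)).mono le_rfl (by omega)).mul
      ((BlockConst.haarSign_right (n - b + 1) _).mono le_rfl (by omega)))).mul
      (BlockConst.prod fun k hk => by
        rw [mem_Ico] at hk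
        exact ((blockConst_emptyBoxHaar ξ n k).comp fun x => 1 + x / 4).mono (by omega)
          (by omega))
  exact IsHaar.of_blockConst (hconst.congr fun i j => (key i j).symm)

lemma rieszCross_corner_eq_zero {a b : ℕ} (hab : a < b) (hb : b ≤ n) (μ : Fin m) (A B : ℕ)
    (hA : ⌊ξ μ 0 * 2 ^ b⌋ = A) (hB : ⌊ξ μ 1 * 2 ^ (n - a)⌋ = B) :
    rieszCross ξ n a b (A * 2 ^ (n - b + 1)) (B * 2 ^ (a + 1)) = 0 := by
  have hdiv : B * 2 ^ (a + 1) / 2 ^ (b + 1) = B / 2 ^ (b - a) := by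
    rw [show b + 1 = (b - a) + (a + 1) by omega, pow_add 2 (b - a),
      Nat.mul_div_mul_right _ _ (by positivity)]
  have hocc : BoxOccupied ξ n b A (B / 2 ^ (b - a)) := by
    refine ⟨μ, hA, ?_⟩
    rw [show n - b = n - a - (b - a) by omega]
    exact floor_mul_two_pow_sub hB (by omega)
  have hfb : emptyBoxHaar ξ n b (A * 2 ^ (n - b + 1)) (B * 2 ^ (a + 1)) = 0 := by
    rw [emptyBoxHaar, Nat.mul_div_cancel _ (by positivity), hdiv, emptyBox, if_pos hocc, zero_mul]
  rw [rieszCross, hfb, mul_zero, zero_mul]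

lemma abs_gridSum_rieszCross_mul_gridDisc_le {a b : ℕ} (hab : a < b) (hb : b ≤ n) :
    |gridSum n (fun i j => rieszCross ξ n a b i j * gridDisc ξ n i j)| ≤
      2 ^ n / 8 * (5 / 8) ^ (b - a - 1) := by
  rw [(isHaar_rieszCross ξ n hab hb).gridSum_mul_gridDisc (Nat.sub_le n b) (by omega) ξ
    fun μ A B hA hB => rieszCross_corner_eq_zero ξ n hab hb μ A B
      (by rwa [Nat.sub_sub_self hb] at hA) hB, Nat.sub_sub_self hb, abs_mul,
    abs_of_nonneg (by positivity)]
  have hsum : |∑ A ∈ range (2 ^ b), ∑ B ∈ range (2 ^ (n - a)),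
      rieszCross ξ n a b (A * 2 ^ (n - b + 1)) (B * 2 ^ (a + 1))| ≤
        2 ^ b * 2 ^ (n - a) * (5 / 4) ^ (b - a - 1) := by
    refine (abs_sum_le_sum_abs _ _).trans ?_
    refine (sum_le_sum fun A _ => (abs_sum_le_sum_abs _ _).trans
      (sum_le_sum fun B _ => abs_rieszCross_le ξ n a b _ _)).trans ?_
    simp [mul_assoc]
  refine (mul_le_mul_of_nonneg_left hsum (by positivity)).trans (le_of_eq ?_)
  obtain ⟨t, rfl⟩ : ∃ t, b = a + 1 + t := ⟨b - a - 1, by omega⟩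
  obtain ⟨c, rfl⟩ : ∃ c, n = a + 1 + t + c := ⟨n - (a + 1 + t), by omega⟩
  rw [show a + 1 + t + c - (a + 1 + t) = c by omega, show a + 1 + t + c - a = c + t + 1 by omega,
    show a + 1 + t - a - 1 = t by omega, show (4 : ℝ) = 2 ^ 2 by norm_num,
    show (8 : ℝ) = 2 ^ 3 by norm_num, div_pow, div_pow]
  simp only [← pow_mul]
  field_simp
  ring

lemma sum_abs_gridSum_rieszCross_mul_gridDisc_le {b : ℕ} (hb : b ≤ n) :
    ∑ a ∈ range b, |gridSum n (fun i j => rieszCross ξ n a b i j * gridDisc ξ n i j)| ≤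
      2 ^ n / 3 := by
  calc ∑ a ∈ range b, |gridSum n (fun i j => rieszCross ξ n a b i j * gridDisc ξ n i j)|
      ≤ ∑ a ∈ range b, 2 ^ n / 8 * (5 / 8 : ℝ) ^ (b - 1 - a) :=
        sum_le_sum fun a ha => by
          rw [Nat.sub_right_comm]
          exact abs_gridSum_rieszCross_mul_gridDisc_le ξ n (mem_range.mp ha) hb
    _ = 2 ^ n / 8 * ∑ t ∈ range b, (5 / 8 : ℝ) ^ t := by
        rw [← mul_sum, sum_range_reflect (fun t => (5 / 8 : ℝ) ^ t) b]
    _ ≤ 2 ^ n / 8 * ((5 / 8) ^ 0 / (1 - 5 / 8)) := by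
        rw [range_eq_Ico]
        gcongr
        exact geom_sum_Ico_le_of_lt_one (by norm_num) (by norm_num)
    _ = 2 ^ n / 3 := by ring

lemma gridSum_rieszProduct_sub_one_mul (W : ℕ → ℕ → ℝ) :
    gridSum n (fun i j => (rieszProduct ξ n i j - 1) * W i j) =
      ∑ b ∈ range (n + 1), (gridSum n (fun i j => emptyBoxHaar ξ n b i j * W i j) / 4 +
        ∑ a ∈ range b, gridSum n (fun i j => rieszCross ξ n a b i j * W i j) / 16) := by
  simp only [rieszProduct_sub_one, sum_mul, add_mul, div_mul_eq_mul_div]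
  rw [gridSum_sum]
  refine sum_congr rfl fun b _ => ?_
  rw [gridSum_add, gridSum_div_const, gridSum_sum]
  simp only [gridSum_div_const]

lemma gridSum_rieszProduct_sub_one : gridSum n (fun i j => rieszProduct ξ n i j - 1) = 0 := by
  have h := gridSum_rieszProduct_sub_one_mul ξ n fun _ _ => 1
  simp only [mul_one] at h
  rw [h]
  refine sum_eq_zero fun b hb => ?_
  rw [mem_range] at hb
  rw [(isHaar_emptyBoxHaar ξ n b).gridSum_eq_zero (Nat.sub_le n b) (by omega),
    sum_eq_zero fun a ha => by
      rw [(isHaar_rieszCross ξ n (mem_range.mp ha) (by omega)).gridSum_eq_zero (Nat.sub_le n b)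
        (by simp at ha; omega), zero_div]]
  norm_num

lemma gridSum_abs_rieszProduct_sub_one_le :
    gridSum n (fun i j => |rieszProduct ξ n i j - 1|) ≤ 2 * 4 ^ (n + 1) := by
  calc gridSum n (fun i j => |rieszProduct ξ n i j - 1|)
      ≤ gridSum n (fun i j => (rieszProduct ξ n i j - 1) + 2) :=
        gridSum_mono fun i _ j _ => by
          have := rieszProduct_nonneg ξ n i j
          rw [abs_le]; constructor <;> linarith
    _ = 2 * 4 ^ (n + 1) := by
        rw [gridSum_add, gridSum_rieszProduct_sub_one, gridSum_const]; ring

lemma gridSum_rieszProduct_sub_one_mul_gridDisc_le :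
    gridSum n (fun i j => (rieszProduct ξ n i j - 1) * gridDisc ξ n i j) ≤
      2 * 4 ^ (n + 1) * Dinf 2 m ξ :=
  calc _ ≤ gridSum n (fun i j => |rieszProduct ξ n i j - 1| * Dinf 2 m ξ) :=
        gridSum_mono fun i hi j hj => (le_abs_self _).trans <| by
          rw [abs_mul]
          exact mul_le_mul_of_nonneg_left (abs_gridDisc_le_Dinf ξ hi hj) (abs_nonneg _)
    _ ≤ 2 * 4 ^ (n + 1) * Dinf 2 m ξ := by
        rw [gridSum_mul_const]
        exact mul_le_mul_of_nonneg_right (gridSum_abs_rieszProduct_sub_one_le ξ n)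
          (Dinf_nonneg ξ)

/-- Each level contributes at least `2 ^ n / 32` through `f_b`, and loses at most `2 ^ n / 48`
through the cross terms. -/
lemma le_gridSum_rieszProduct_sub_one_mul_gridDisc (h2m : 2 * m ≤ 2 ^ n) :
    (n + 1) * 2 ^ n / 96 ≤
      gridSum n (fun i j => (rieszProduct ξ n i j - 1) * gridDisc ξ n i j) := by
  rw [gridSum_rieszProduct_sub_one_mul]
  calc (n + 1) * 2 ^ n / 96 = ∑ _b ∈ range (n + 1), (2 : ℝ) ^ n / 96 := by
        rw [sum_const, card_range, nsmul_eq_mul]; push_cast; ring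
    _ ≤ _ := sum_le_sum fun b hb => by
        have hb' : b ≤ n := Nat.lt_succ_iff.mp (mem_range.mp hb)
        have hmain := le_gridSum_emptyBoxHaar_mul_gridDisc ξ n hb' h2m
        have hcross := (abs_le.mp ((abs_sum_le_sum_abs _ _).trans
          (sum_abs_gridSum_rieszCross_mul_gridDisc_le ξ n hb'))).1
        rw [← sum_div]
        linarith

end Riesz

theorem succ_le_mul_Dinf {m : ℕ} (ξ : Fin m → Fin 2 → ℝ) {n : ℕ} (h2m : 2 * m ≤ 2 ^ n) :
    (n + 1 : ℝ) ≤ 768 * 2 ^ n * Dinf 2 m ξ := by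
  have hupper := gridSum_rieszProduct_sub_one_mul_gridDisc_le ξ n
  have hlower := le_gridSum_rieszProduct_sub_one_mul_gridDisc ξ n h2m
  rw [show (4 : ℝ) ^ (n + 1) = 4 * 2 ^ n * 2 ^ n by
    rw [pow_succ, mul_comm, mul_assoc, ← mul_pow]; norm_num] at hupper
  have h2n : (0 : ℝ) < 2 ^ n := by positivity
  nlinarith

theorem inv_mul_log_le_Dinf {m : ℕ} (hm : m ≠ 0) (ξ : Fin m → Fin 2 → ℝ) :
    1 / 3072 * (m : ℝ)⁻¹ * Real.log m ≤ Dinf 2 m ξ := by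
  set n := Nat.log 2 m + 2
  have hlog_le : 2 ^ Nat.log 2 m ≤ m := Nat.pow_log_le_self 2 hm
  have hlt_log : m < 2 ^ (Nat.log 2 m + 1) := Nat.lt_pow_succ_log_self (by norm_num) m
  have h2m : 2 * m ≤ 2 ^ n := by rw [pow_succ]; omega
  have hn : (2 : ℝ) ^ n ≤ 4 * m := by
    exact_mod_cast (show 2 ^ n ≤ 4 * m by rw [pow_succ, pow_succ]; omega)
  have hm' : (0 : ℝ) < m := by positivity
  have hlog : Real.log m ≤ n + 1 := by
    have h : Real.log m ≤ n * Real.log 2 := by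
      rw [← Real.log_pow]
      exact Real.log_le_log hm' (by exact_mod_cast (h2m.trans' (by omega)))
    nlinarith [Real.log_two_lt_d9, Real.log_pos one_lt_two]
  have hD := succ_le_mul_Dinf ξ h2m
  rw [mul_assoc, div_mul_eq_mul_div, one_mul, div_le_iff₀ (by norm_num), inv_mul_le_iff₀ hm']
  nlinarith [Dinf_nonneg ξ]

end

end Schmidt

theorem statement2 :
    ∃ C : ℝ, 0 < C ∧
      ∀ m : ℕ, 2 ≤ m → ∀ ξ : Fin m → Fin 2 → ℝ,
        (∀ μ j, ξ μ j ∈ Set.Ico (0 : ℝ) 1) →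
        C * (m : ℝ)⁻¹ * Real.log m ≤ Dinf 2 m ξ :=
  ⟨1 / 3072, by norm_num, fun _ hm ξ _ => Schmidt.inv_mul_log_le_Dinf (by omega) ξ⟩
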